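/- Call an EL-chart A normalised if Σ_{b ∈ B_(0)} |b| = n(n−1)/2, where B_(0) = (A ∖ (A+n)) ∩ ℤ_(0). Then every EL-chart is equivalent to exactly one normalised EL-chart. -/

import Mathlib

namespace ELChart

/-- An EL-chart (for parameters `d`, `n` and `mfun τ = m_τ`): a non-empty subset
`A ⊆ ℤ^(d) = (ℤ/dℤ) × ℤ` which is bounded below and satisfies `f(A) ⊆ A` and `A + n ⊆ A`,
where `f (τ, x) = (τ + 1, x + m_τ)`. -/
def IsChart (d n : ℕ) (mfun : ZMod d → ℤ) (A : Set (ZMod d × ℤ)) : Prop :=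
  A.Nonempty ∧ (∃ c : ℤ, ∀ p ∈ A, c ≤ p.2) ∧
    (∀ p ∈ A, ((p.1 + 1 : ZMod d), p.2 + mfun p.1) ∈ A) ∧
    (∀ p ∈ A, (p.1, p.2 + (n : ℤ)) ∈ A)

/-- `B = A ∖ (A + n)`. -/
def Bset (d n : ℕ) (A : Set (ZMod d × ℤ)) : Set (ZMod d × ℤ) :=
  {p | p ∈ A ∧ (p.1, p.2 - (n : ℤ)) ∉ A}

/-- The shift `A + z` of a subset of `ℤ^(d)`. -/
def shift (d : ℕ) (A : Set (ZMod d × ℤ)) (z : ℤ) : Set (ZMod d × ℤ) :=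
  (fun p : ZMod d × ℤ => (p.1, p.2 + z)) '' A

/-- Two EL-charts are equivalent if they differ by a shift. -/
def ChartEquiv (d : ℕ) (A A' : Set (ZMod d × ℤ)) : Prop :=
  ∃ z : ℤ, shift d A z = A'

/-- The sequence `b 0, b 1, …` associated with an EL-chart: `b 0 = min B_(0)` and `b (i+1)`
is the unique element of `B` of the form `f (b i) − c * n` with `c` a non-negative integer. -/
noncomputable def bseq (d n : ℕ) (mfun : ZMod d → ℤ) (A : Set (ZMod d × ℤ)) :
    ℕ → ZMod d × ℤ
  | 0 => ((0 : ZMod d), sInf {x : ℤ | ((0 : ZMod d), x) ∈ Bset d n A})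
  | i + 1 =>
    ((bseq d n mfun A i).1 + 1,
      sInf {y : ℤ | ((bseq d n mfun A i).1 + 1, y) ∈ Bset d n A ∧
        ((bseq d n mfun A i).2 + mfun (bseq d n mfun A i).1 - y) % (n : ℤ) = 0 ∧
        y ≤ (bseq d n mfun A i).2 + mfun (bseq d n mfun A i).1})

/-- The entry `μ'_k` (for `1 ≤ k ≤ d*n`) of the type of an EL-chart: the non-negative integer
with `b k = f (b (k-1)) − μ'_k * n`. -/
noncomputable def typeInt (d n : ℕ) (mfun : ZMod d → ℤ) (A : Set (ZMod d × ℤ)) (k : ℕ) : ℤ :=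
  ((bseq d n mfun A (k - 1)).2 + mfun (bseq d n mfun A (k - 1)).1
    - (bseq d n mfun A k).2) / (n : ℤ)

/-- The type of an EL-chart as a tuple: `μ'_{τ,i} = μ'_{τ + (i−1)d}` where the `Fin d`-index
`τ` corresponds to `τ + 1 ∈ {1, …, d}` and the `Fin n`-index `i` to `i + 1 ∈ {1, …, n}`. -/
noncomputable def typeTup (d n : ℕ) (mfun : ZMod d → ℤ) (A : Set (ZMod d × ℤ)) :
    Fin d → Fin n → ℤ :=
  fun τ i => typeInt d n mfun A (τ.val + 1 + i.val * d)

/-- The entry `μ'_{τ',i'}` of the type of an EL-chart attached to an element `p = b_{τ',i'}`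
of `B`: if `q ∈ B` is the (unique) predecessor of `p`, i.e. the element with
`p = f q − c * n` for a non-negative integer `c`, then `muOf p = c`. -/
noncomputable def muOf (d n : ℕ) (mfun : ZMod d → ℤ) (A : Set (ZMod d × ℤ))
    (p : ZMod d × ℤ) : ℤ :=
  (sInf {y : ℤ | ((p.1 - 1 : ZMod d), y) ∈ Bset d n A ∧
      (y + mfun (p.1 - 1) - p.2) % (n : ℤ) = 0 ∧ p.2 ≤ y + mfun (p.1 - 1)}
    + mfun (p.1 - 1) - p.2) / (n : ℤ)

/-- The `i`-th largest element `b̃_{τ,i}` of `B_(τ)` (1-indexed: `i ∈ {1, …, n}`): the unique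
element of `B_(τ)` with exactly `i − 1` elements of `B_(τ)` above it. -/
noncomputable def btilde (d n : ℕ) (A : Set (ZMod d × ℤ)) (τ : ZMod d) (i : ℕ) : ℤ :=
  sInf {y : ℤ | (τ, y) ∈ Bset d n A ∧
    Set.ncard {z : ℤ | (τ, z) ∈ Bset d n A ∧ y < z} = i - 1}

/-- The cotype of an EL-chart as a tuple: `μ̃_{τ,i} = μ'_{τ',i'}` where `b̃_{τ,i} = b_{τ',i'}`,
i.e. the type entry attached to the `i`-th largest element of `B_(τ)`. -/
noncomputable def cotypeTup (d n : ℕ) (mfun : ZMod d → ℤ) (A : Set (ZMod d × ℤ)) :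
    Fin d → Fin n → ℤ :=
  fun τ i =>
    muOf d n mfun A (((τ.val + 1 : ℕ) : ZMod d),
      btilde d n A ((τ.val + 1 : ℕ) : ZMod d) (i.val + 1))

/-- Membership in `P_{m,n,d}`: all entries are non-negative and
`Σ_{i=1}^k Σ_{τ=1}^d μ_{τ,i} ≤ k*m/n` for `k = 1, …, n`, with equality for `k = n`. -/
def memP (d n m : ℕ) (μ : Fin d → Fin n → ℤ) : Prop :=
  (∀ τ i, 0 ≤ μ τ i) ∧
    (∀ k : ℕ, 1 ≤ k → k ≤ n →
      (n : ℤ) * ∑ τ : Fin d, ∑ i : Fin n, (if i.val + 1 ≤ k then μ τ i else 0)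
        ≤ (k : ℤ) * (m : ℤ)) ∧
    (∑ τ : Fin d, ∑ i : Fin n, μ τ i) = (m : ℤ)

/-- An EL-chart is normalised if `Σ_{b ∈ B_(0)} |b| = n(n−1)/2`. -/
def IsNormalised (d n : ℕ) (A : Set (ZMod d × ℤ)) : Prop :=
  ∑ᶠ x ∈ {x : ℤ | ((0 : ZMod d), x) ∈ Bset d n A}, x = ((n * (n - 1) / 2 : ℕ) : ℤ)

/-- The dominant rearrangement of a tuple: each component is sorted weakly decreasingly. -/
def domOf (d n : ℕ) (μ : Fin d → Fin n → ℤ) : Fin d → Fin n → ℤ :=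
  fun τ i => μ τ (Tuple.sort (fun j => -(μ τ j)) i)

/-- A tuple is dominant if each of its `d` components is weakly decreasing. -/
def IsDom (d n : ℕ) (μ : Fin d → Fin n → ℤ) : Prop :=
  ∀ τ : Fin d, ∀ i j : Fin n, i ≤ j → μ τ j ≤ μ τ i

end ELChart

open ELChart

/-! The fibre `A_(0)` is closed under `+ n` and, since `f^d` adds `m_0 + ⋯ + m_{d-1} = m`, under
`+ m`; as `gcd(m, n) = 1` it meets every residue class mod `n`, and `B_(0)` consists of the least
element of `A_(0)` in each class. Hence `Σ_{b ∈ B_(0)} b ≡ 0 + 1 + ⋯ + (n - 1) (mod n)`, while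
shifting `A` by `z` adds `n z` to this sum, so exactly one shift of `A` is normalised. -/

open Finset

theorem ZMod.sum_comp_val {M : Type*} [AddCommMonoid M] (n : ℕ) [NeZero n] (f : ℕ → M) :
    ∑ r : ZMod n, f r.val = ∑ i ∈ range n, f i := by
  rw [← Fin.sum_univ_eq_sum_range]
  refine (Fintype.sum_equiv (ZMod.finEquiv n).toEquiv _ _ fun i => ?_).symm
  obtain ⟨k, rfl⟩ : ∃ k, n = k + 1 := ⟨n - 1, (Nat.sub_add_cancel NeZero.one_le).symm⟩
  rfl

theorem ZMod.sum_univ_id (n : ℕ) [NeZero n] :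
    ∑ r : ZMod n, r = ((n * (n - 1) / 2 : ℕ) : ZMod n) := by
  simp_rw [← Finset.sum_range_id, ← ZMod.sum_comp_val, Nat.cast_sum, ZMod.natCast_zmod_val]

theorem Int.modEq_sum_of_intCast_eq {n : ℕ} [NeZero n] {g : ZMod n → ℤ}
    (hg : ∀ r, (g r : ZMod n) = r) : ∑ r, g r ≡ (n * (n - 1) / 2 : ℕ) [ZMOD n] := by
  rw [← ZMod.intCast_eq_intCast_iff, Int.cast_sum, Int.cast_natCast]
  simp_rw [hg, ZMod.sum_univ_id]

theorem finsum_mem_image_add_range {ι : Type*} [Fintype ι] {g : ι → ℤ}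
    (hg : Function.Injective g) (z : ℤ) :
    ∑ᶠ x ∈ (· + z) '' Set.range g, x = ∑ i, g i + Fintype.card ι * z := by
  rw [← Set.range_comp, finsum_mem_range ((add_left_injective z).comp hg),
    finsum_eq_sum_of_fintype, Function.comp_def, sum_add_distrib, sum_const, card_univ,
    nsmul_eq_mul]

section ResidueMinima

variable {S : Set ℤ}

theorem add_nat_mul_mem_of_add_mem {c : ℤ} (hS : ∀ x ∈ S, x + c ∈ S) {x : ℤ} (hx : x ∈ S)
    (k : ℕ) : x + k * c ∈ S := by
  induction k with
  | zero => simpa using hx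
  | succ k ih => simpa [add_mul, ← add_assoc] using hS _ ih

theorem exists_mem_intCast_eq_of_add_mem {n m : ℕ} [NeZero n] (hmn : m.Coprime n)
    (hne : S.Nonempty) (hm : ∀ x ∈ S, x + m ∈ S) (r : ZMod n) : ∃ x ∈ S, (x : ZMod n) = r := by
  obtain ⟨a, ha⟩ := hne
  have hu : IsUnit (m : ZMod n) := (ZMod.isUnit_iff_coprime m n).2 hmn
  set k := ((r - a) * (m : ZMod n)⁻¹).val
  refine ⟨a + k * m, add_nat_mul_mem_of_add_mem hm ha k, ?_⟩
  push_cast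
  rw [ZMod.natCast_zmod_val, mul_assoc, ZMod.inv_mul_of_unit _ hu]
  ring

theorem le_of_sub_notMem_of_add_mem {n : ℕ} (hstep : ∀ x ∈ S, x + n ∈ S) {x y : ℤ}
    (hx : x - n ∉ S) (hy : y ∈ S) (hxy : (x : ZMod n) = y) : x ≤ y := by
  obtain ⟨t, ht⟩ := ((ZMod.intCast_eq_intCast_iff _ _ _).1 hxy).symm.dvd
  by_contra! hlt
  have ht_pos : 0 < t := pos_of_mul_pos_right (ht ▸ sub_pos.2 hlt) n.cast_nonneg
  obtain ⟨k, rfl⟩ : ∃ k : ℕ, t = k + 1 := ⟨(t - 1).toNat, by omega⟩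
  have hxk : x - n = y + k * n := by linear_combination ht
  exact hx (hxk ▸ add_nat_mul_mem_of_add_mem hstep hy k)

theorem exists_residue_section {n : ℕ} [NeZero n] (hbdd : BddBelow S)
    (hstep : ∀ x ∈ S, x + n ∈ S) (hres : ∀ r : ZMod n, ∃ x ∈ S, (x : ZMod n) = r) :
    ∃ g : ZMod n → ℤ, (∀ r, (g r : ZMod n) = r) ∧ {x | x ∈ S ∧ x - n ∉ S} = Set.range g := by
  obtain ⟨c, hc⟩ := hbdd
  have hleast (r : ZMod n) : ∃ x, (x ∈ S ∧ (x : ZMod n) = r) ∧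
      ∀ y, y ∈ S ∧ (y : ZMod n) = r → x ≤ y :=
    Int.exists_least_of_bdd ⟨c, fun y hy => hc hy.1⟩ (hres r)
  choose g hg hg_le using hleast
  refine ⟨g, fun r => (hg r).2, Set.ext fun x => ⟨fun ⟨hxS, hx⟩ => ⟨x, ?_⟩, ?_⟩⟩
  · exact le_antisymm (hg_le _ x ⟨hxS, rfl⟩)
      (le_of_sub_notMem_of_add_mem hstep hx (hg x).1 (hg x).2.symm)
  · rintro ⟨r, rfl⟩
    refine ⟨(hg r).1, fun hmem => ?_⟩
    have := hg_le r _ ⟨hmem, by push_cast; rw [(hg r).2, ZMod.natCast_self, sub_zero]⟩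
    linarith [(NeZero.pos n : 0 < n)]

end ResidueMinima

namespace ELChart

variable {d n : ℕ} {mfun : ZMod d → ℤ} {A : Set (ZMod d × ℤ)}

def zeroFiber (A : Set (ZMod d × ℤ)) : Set ℤ := {x | ((0 : ZMod d), x) ∈ A}

theorem zeroFiber_Bset :
    zeroFiber (Bset d n A) = {x | x ∈ zeroFiber A ∧ x - n ∉ zeroFiber A} :=
  rfl

theorem isNormalised_iff :
    IsNormalised d n A ↔ ∑ᶠ x ∈ zeroFiber (Bset d n A), x = ((n * (n - 1) / 2 : ℕ) : ℤ) :=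
  Iff.rfl

theorem mem_shift {z : ℤ} {p : ZMod d × ℤ} : p ∈ shift d A z ↔ (p.1, p.2 - z) ∈ A := by
  constructor
  · rintro ⟨q, hq, rfl⟩
    simpa using hq
  · exact fun hp => ⟨_, hp, by simp⟩

theorem Bset_shift (z : ℤ) : Bset d n (shift d A z) = shift d (Bset d n A) z := by
  ext p
  simp only [Bset, Set.mem_ofPred_eq, mem_shift, sub_right_comm]

theorem zeroFiber_shift (z : ℤ) : zeroFiber (shift d A z) = (· + z) '' zeroFiber A := by
  ext x
  simp [zeroFiber, mem_shift, Set.image_add_right, sub_eq_add_neg]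

namespace IsChart

theorem iterate_mem (hA : IsChart d n mfun A) {p : ZMod d × ℤ} (hp : p ∈ A) (k : ℕ) :
    (p.1 + k, p.2 + ∑ j ∈ range k, mfun (p.1 + j)) ∈ A := by
  induction k with
  | zero => simpa using hp
  | succ k ih => simpa [sum_range_succ, add_assoc] using hA.2.2.1 _ ih

theorem zeroFiber_nonempty [NeZero d] (hA : IsChart d n mfun A) : (zeroFiber A).Nonempty := by
  obtain ⟨p, hp⟩ := hA.1
  have h := hA.iterate_mem hp (-p.1).val
  rw [ZMod.natCast_zmod_val, add_neg_cancel] at h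
  exact ⟨_, h⟩

theorem bddBelow_zeroFiber (hA : IsChart d n mfun A) : BddBelow (zeroFiber A) :=
  let ⟨c, hc⟩ := hA.2.1
  ⟨c, fun _ hx => hc _ hx⟩

theorem add_mem_zeroFiber (hA : IsChart d n mfun A) {x : ℤ} (hx : x ∈ zeroFiber A) :
    x + n ∈ zeroFiber A :=
  hA.2.2.2 _ hx

theorem add_sum_mem_zeroFiber [NeZero d] (hA : IsChart d n mfun A) {x : ℤ}
    (hx : x ∈ zeroFiber A) : x + ∑ τ, mfun τ ∈ zeroFiber A := by
  have h := hA.iterate_mem hx d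
  rw [← ZMod.sum_comp_val d (fun j => mfun (0 + j))] at h
  simpa [zeroFiber] using h

theorem exists_zeroFiber_Bset_eq_range [NeZero d] [NeZero n] {m : ℕ}
    (hA : IsChart d n mfun A) (hmn : m.Coprime n) (hsum : ∑ τ, mfun τ = m) :
    ∃ g : ZMod n → ℤ, (∀ r, (g r : ZMod n) = r) ∧ zeroFiber (Bset d n A) = Set.range g := by
  have hres := exists_mem_intCast_eq_of_add_mem hmn hA.zeroFiber_nonempty fun _ hx =>
    hsum ▸ hA.add_sum_mem_zeroFiber hx
  rw [zeroFiber_Bset]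
  exact exists_residue_section hA.bddBelow_zeroFiber (fun _ => hA.add_mem_zeroFiber) hres

end IsChart

end ELChart

theorem exists_unique_normalised_general
    (d n m : ℕ) [NeZero d] (hn : 0 < n) (hmn : Nat.Coprime m n)
    (mfun : ZMod d → ℤ) (hsum : ∑ τ : ZMod d, mfun τ = (m : ℤ))
    (A : Set (ZMod d × ℤ)) (hA : IsChart d n mfun A) :
    ∃! A' : Set (ZMod d × ℤ), ChartEquiv d A A' ∧ IsNormalised d n A' := by
  have : NeZero n := ⟨hn.ne'⟩
  obtain ⟨g, hg, hB⟩ := hA.exists_zeroFiber_Bset_eq_range hmn hsum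
  have hsum_shift (z : ℤ) :
      ∑ᶠ x ∈ zeroFiber (Bset d n (shift d A z)), x = ∑ r, g r + n * z := by
    rw [Bset_shift, zeroFiber_shift, hB,
      finsum_mem_image_add_range (Function.LeftInverse.injective hg), ZMod.card]
  obtain ⟨C, hC⟩ := (Int.modEq_sum_of_intCast_eq hg).dvd
  have hnormalised_iff (z : ℤ) : IsNormalised d n (shift d A z) ↔ z = C := by
    rw [isNormalised_iff, hsum_shift, ← eq_sub_iff_add_eq', hC,
      mul_right_inj' (by exact_mod_cast hn.ne')]
  refine ⟨shift d A C, ⟨⟨C, rfl⟩, (hnormalised_iff C).2 rfl⟩, ?_⟩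
  rintro _ ⟨⟨z, rfl⟩, hz⟩
  rw [(hnormalised_iff z).1 hz]

/-- Every EL-chart is equivalent to exactly one normalised EL-chart
(`A` is normalised if `Σ_{b ∈ B_(0)} |b| = n(n−1)/2`). -/
theorem exists_unique_normalised
    (d n m : ℕ) [NeZero d] (hn : 0 < n) (hm : 0 < m) (hmn : Nat.Coprime m n)
    (mfun : ZMod d → ℤ) (hsum : ∑ τ : ZMod d, mfun τ = (m : ℤ))
    (A : Set (ZMod d × ℤ)) (hA : IsChart d n mfun A) :
    ∃! A' : Set (ZMod d × ℤ), ChartEquiv d A A' ∧ IsNormalised d n A' :=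
  exists_unique_normalised_general d n m hn hmn mfun hsum A hA
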